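/- arXiv:1801.10021 — 3 statements merged into one kernel-verified Lean document; each statement's English description precedes it below -/
import Mathlib

section
/- Let z, a₁, b₁, a₁', b₁', A, A_S, C, C_S, D, D_S ∈ ℂ with a₁ ≠ 0. Set M := !![(z - b₁)/a₁, 1/a₁; -a₁, 0], Ṁ := !![(-b₁' * a₁ - (z - b₁) * a₁')/a₁^2, -a₁'/a₁^2; -a₁', 0], B := !![A, C; D, -A], and B_S := !![A_S, C_S; D_S, -A_S]. Then the zero-curvature equation Ṁ = B_S * M - M * B holds if and only if the following three equations hold simultaneously: (1) D_S = -a₁^2 * C; (2) A_S + A = -a₁'/a₁ + (z - b₁) * C; (3) ((z - b₁)/a₁) * (A_S - A) = (-b₁' * a₁ - (z - b₁) * a₁')/a₁^2 + a₁ * C_S + D/a₁. -/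
theorem zero_curvature_iff_master_equations
    (z a₁ b₁ a₁' b₁' A A_S C C_S D D_S : ℂ) (ha₁ : a₁ ≠ 0) :
    (!![(-b₁' * a₁ - (z - b₁) * a₁') / a₁ ^ 2, -a₁' / a₁ ^ 2; -a₁', 0] : Matrix (Fin 2) (Fin 2) ℂ)
        = !![A_S, C_S; D_S, -A_S] * !![(z - b₁) / a₁, 1 / a₁; -a₁, 0]
          - !![(z - b₁) / a₁, 1 / a₁; -a₁, 0] * !![A, C; D, -A]
      ↔ (D_S = -a₁ ^ 2 * C
          ∧ A_S + A = -a₁' / a₁ + (z - b₁) * C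
          ∧ ((z - b₁) / a₁) * (A_S - A)
              = (-b₁' * a₁ - (z - b₁) * a₁') / a₁ ^ 2 + a₁ * C_S + D / a₁) := by
  rw [← Matrix.ext_iff]
  simp [Fin.forall_fin_two, Matrix.mul_apply, Fin.sum_univ_two]
  constructor
  · rintro ⟨⟨h00, h01⟩, h10, h11⟩
    refine ⟨?_, ?_, ?_⟩
    · linear_combination (norm := (field_simp; ring)) -a₁ * h11
    · linear_combination (norm := (field_simp; ring)) -a₁ * h01
    · linear_combination (norm := (field_simp; ring)) -h00
  · rintro ⟨h1, h2, h3⟩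
    refine ⟨⟨?_, ?_⟩, ?_, ?_⟩
    · linear_combination (norm := (field_simp; ring)) -h3
    · linear_combination (norm := (field_simp; ring)) (-1 / a₁) * h2
    · linear_combination (norm := (field_simp; ring)) (-(z - b₁) / a₁) * h1 + (-a₁) * h2
    · linear_combination (norm := (field_simp; ring)) (-1 / a₁) * h1
end

section
/- Let d ∈ ℕ with d ≥ 1, let A, A_S, C, C_S, D be polynomials in Polynomial ℂ each of degree ≤ d, let L be a polynomial of degree ≤ 1, and let b₁, c, a₁ ∈ ℂ. Suppose (1) A_S + A = Polynomial.C c + (Polynomial.X - Polynomial.C b₁) * C and (2) (Polynomial.X - Polynomial.C b₁) * (A_S - A) = L + Polynomial.C (a₁^2) * C_S + D. Then A_S.coeff d = A.coeff d and A.coeff d = C.coeff (d - 1) / 2. -/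
open Polynomial

theorem top_coeff_shift_invariant
    (d : ℕ) (hd : 1 ≤ d) (A A_S C C_S D : Polynomial ℂ)
    (hA : A.degree ≤ d) (hA_S : A_S.degree ≤ d) (hC : C.degree ≤ d)
    (hC_S : C_S.degree ≤ d) (hD : D.degree ≤ d)
    (L : Polynomial ℂ) (hL : L.degree ≤ 1)
    (b₁ c a₁ : ℂ)
    (h1 : A_S + A = Polynomial.C c + (Polynomial.X - Polynomial.C b₁) * C)
    (h2 : (Polynomial.X - Polynomial.C b₁) * (A_S - A)
        = L + Polynomial.C (a₁ ^ 2) * C_S + D) :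
    A_S.coeff d = A.coeff d ∧ A.coeff d = C.coeff (d - 1) / 2 := by
  obtain ⟨n, rfl⟩ : ∃ n, d = n + 1 := ⟨d - 1, (Nat.succ_pred_eq_of_pos hd).symm⟩
  set d := n + 1 with hdn
  have hz : ∀ P : Polynomial ℂ, P.degree ≤ (d : WithBot ℕ) → P.coeff (d + 1) = 0 := by
    intro P hP
    exact Polynomial.coeff_eq_zero_of_degree_lt
      (hP.trans_lt (by exact_mod_cast Nat.lt_succ_self d))
  have hLz : L.coeff (d + 1) = 0 :=
    Polynomial.coeff_eq_zero_of_degree_lt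
      (hL.trans_lt (by exact_mod_cast Nat.lt_of_lt_of_le (Nat.lt_succ_self 1) (Nat.succ_le_succ hd)))
  have hAz := hz A hA
  have hASz := hz A_S hA_S
  have hCz := hz C hC
  have hCSz := hz C_S hC_S
  have hDz := hz D hD
  have e1 := congrArg (fun p => Polynomial.coeff p (d + 1)) h1
  have e1' := congrArg (fun p => Polynomial.coeff p d) h1
  have e2 := congrArg (fun p => Polynomial.coeff p (d + 1)) h2
  simp only [hdn, Polynomial.coeff_add, Polynomial.coeff_sub, sub_mul,
    Polynomial.coeff_X_mul, Polynomial.coeff_C_mul,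
    Polynomial.coeff_C, Nat.succ_ne_zero, if_neg, if_false] at e1 e1' e2
  rw [hdn] at hAz hASz hCz hCSz hDz hLz
  have hCd : C.coeff (n + 1) = 0 := by
    rw [hAz, hASz, hCz] at e1
    linear_combination -e1
  have hASA : A_S.coeff (n + 1) = A.coeff (n + 1) := by
    rw [hAz, hASz, hCSz, hDz, hLz] at e2
    linear_combination e2
  refine ⟨hASA, ?_⟩
  rw [hCd] at e1'
  simp only [hdn, Nat.add_sub_cancel]
  rw [hASA] at e1'
  linear_combination e1' / 2
end

section
/- Fix d ∈ ℕ with d ≥ 1. For each pair w = (a, b) of sequences a, b : ℤ → ℝ with a n > 0 for all n, let J(w) be the Jacobi operator on (ℤ → ℂ), let μ(w) t := ((J(w))^t δ₁) 1 and ν(w) t := ((J(w))^t δ₂) 1, and let S(a, b) := (n ↦ a (n+1), n ↦ b (n+1)) be the shift. Let A, C, D assign to each index j ∈ {0, …, d} and each such pair w a complex number, and assume that for every w (writing a₁ = a 1, b₁ = b 1): (i) D j (S w) = -a₁^2 * C j w for all j ≤ d; (ii) C d w = 0; (iii) A j (S w) + A j w = C (j-1) w - b₁ * C j w for all 1 ≤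 j ≤ d; (iv) A d (S w) = A d w; (v) -b₁ * (A j (S w) - A j w) + (A (j-1) (S w) - A (j-1) w) = a₁^2 * C j (S w) + D j w for all 2 ≤ j ≤ d. Define p j w for j = d, d-1, …, 1 by p d w = C (d-1) w / 2 and p r w = C (r-1) w / 2 - ∑_{s=r+1}^{d} p s w * μ(w) (s - r); define q j w by q d w = -A d w + C (d-1) w, q (d-1) w = -A (d-1) w + C (d-2) w - b₁ * C (d-1) w, and q r w = -2 * a₁ * ∑_{s=r+2}^{d} ν(w) (s - r - 1) * q s w - A r w + C (r-1) w - b₁ * C r w for 1 ≤ r ≤ d - 2. Then for every such pair w and every j with 1 ≤ j ≤ d: p j (S w) = p j w, q j (S w) = q j w, and p j w = q j w. -/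
namespace MainpropAux

abbrev Pair := (ℤ → ℝ) × (ℤ → ℝ)

variable {Jop : Pair → ((ℤ → ℂ) →ₗ[ℂ] (ℤ → ℂ))}

/-- J applied to a delta function. -/
lemma jsingle (hJ : ∀ (w : Pair) (u : ℤ → ℂ) (n : ℤ),
      Jop w u n = (w.1 n : ℂ) * u (n + 1) + (w.1 (n - 1) : ℂ) * u (n - 1) + (w.2 n : ℂ) * u n)
    (w : Pair) (n : ℤ) :
    Jop w (Pi.single n 1) = (w.1 (n-1) : ℂ) • (Pi.single (n-1) 1 : ℤ → ℂ)
      + (w.1 n : ℂ) • (Pi.single (n+1) 1 : ℤ → ℂ) + (w.2 n : ℂ) • (Pi.single n 1 : ℤ → ℂ) := by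
  funext k
  rw [hJ]
  simp only [Pi.add_apply, Pi.smul_apply, smul_eq_mul, Pi.single_apply]
  split_ifs <;>
    first
      | ring1
      | (exfalso; omega)
      | (rw [show k = n-1 from by omega]; ring1)
      | (rw [show k = n+1 from by omega]; ring1)
      | (rw [show k = n from by omega]; ring1)
      | (rw [show k - 1 = n from by omega]; ring1)
      | (rw [show k + 1 = n from by omega]; ring1)

end MainpropAux

namespace MainpropAux

variable {Jop : Pair → ((ℤ → ℂ) →ₗ[ℂ] (ℤ → ℂ))}

lemma E1 (hJ : ∀ (w : Pair) (u : ℤ → ℂ) (n : ℤ),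
      Jop w u n = (w.1 n : ℂ) * u (n + 1) + (w.1 (n - 1) : ℂ) * u (n - 1) + (w.2 n : ℂ) * u n)
    (w : Pair) (t : ℕ) (n m : ℤ) :
    (Jop w ^ (t+1)) (Pi.single n 1) m
      = (w.1 (n-1) : ℂ) * (Jop w ^ t) (Pi.single (n-1) 1) m
        + (w.1 n : ℂ) * (Jop w ^ t) (Pi.single (n+1) 1) m
        + (w.2 n : ℂ) * (Jop w ^ t) (Pi.single n 1) m := by
  rw [pow_succ, Module.End.mul_apply, jsingle hJ, map_add, map_add, map_smul, map_smul, map_smul]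
  simp [Pi.smul_apply, smul_eq_mul]

lemma E2 (hJ : ∀ (w : Pair) (u : ℤ → ℂ) (n : ℤ),
      Jop w u n = (w.1 n : ℂ) * u (n + 1) + (w.1 (n - 1) : ℂ) * u (n - 1) + (w.2 n : ℂ) * u n)
    (w : Pair) (t : ℕ) (n m : ℤ) :
    (Jop w ^ (t+1)) (Pi.single n 1) m
      = (w.1 m : ℂ) * (Jop w ^ t) (Pi.single n 1) (m+1)
        + (w.1 (m-1) : ℂ) * (Jop w ^ t) (Pi.single n 1) (m-1)
        + (w.2 m : ℂ) * (Jop w ^ t) (Pi.single n 1) m := by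
  rw [pow_succ', Module.End.mul_apply, hJ]

lemma symG (hJ : ∀ (w : Pair) (u : ℤ → ℂ) (n : ℤ),
      Jop w u n = (w.1 n : ℂ) * u (n + 1) + (w.1 (n - 1) : ℂ) * u (n - 1) + (w.2 n : ℂ) * u n)
    (w : Pair) : ∀ (t : ℕ) (m n : ℤ),
    (Jop w ^ t) (Pi.single n 1) m = (Jop w ^ t) (Pi.single m 1) n := by
  intro t
  induction t with
  | zero =>
    intro m n
    simp only [pow_zero, Module.End.one_apply, Pi.single_apply]
    by_cases h : m = n
    · subst h; rfl
    · rw [if_neg h, if_neg (fun hh => h hh.symm)]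
  | succ t ih =>
    intro m n
    rw [E2 hJ, ih (m+1) n, ih (m-1) n, ih m n, E1 hJ]
    ring

end MainpropAux

namespace MainpropAux

variable {Jop : Pair → ((ℤ → ℂ) →ₗ[ℂ] (ℤ → ℂ))} {S : Pair → Pair}

lemma conjpow (hJ : ∀ (w : Pair) (u : ℤ → ℂ) (n : ℤ),
      Jop w u n = (w.1 n : ℂ) * u (n + 1) + (w.1 (n - 1) : ℂ) * u (n - 1) + (w.2 n : ℂ) * u n)
    (hS : ∀ w : Pair, S w = (fun n => w.1 (n + 1), fun n => w.2 (n + 1)))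
    (w : Pair) : ∀ (t : ℕ) (u : ℤ → ℂ) (n : ℤ),
    (Jop (S w) ^ t) u n = (Jop w ^ t) (fun m => u (m - 1)) (n + 1) := by
  intro t
  induction t with
  | zero =>
    intro u n
    simp only [pow_zero, Module.End.one_apply]
    norm_num
  | succ t ih =>
    intro u n
    rw [pow_succ', Module.End.mul_apply, hJ, ih, ih, ih,
      pow_succ', Module.End.mul_apply, hJ]
    have e1 : (S w).1 n = w.1 (n + 1) := by rw [hS]
    have e2 : (S w).1 (n - 1) = w.1 (n - 1 + 1) := by rw [hS]
    have e3 : (S w).2 n = w.2 (n + 1) := by rw [hS]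
    have e4 : n - 1 + 1 = n := by ring
    have e5 : (n : ℤ) + 1 - 1 = n := by ring
    rw [e1, e2, e3, e4, e5]

end MainpropAux

namespace MainpropAux

variable {Jop : Pair → ((ℤ → ℂ) →ₗ[ℂ] (ℤ → ℂ))} {S : Pair → Pair}
variable {μ ν : Pair → ℕ → ℂ}

def back (w : Pair) : Pair := (fun n => w.1 (n-1), fun n => w.2 (n-1))

lemma S_back (hS : ∀ w : Pair, S w = (fun n => w.1 (n + 1), fun n => w.2 (n + 1)))
    (w : Pair) : S (back w) = w := by
  rw [hS]
  apply Prod.ext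
  · funext n; show w.1 (n + 1 - 1) = w.1 n; norm_num
  · funext n; show w.2 (n + 1 - 1) = w.2 n; norm_num

lemma back_S (hS : ∀ w : Pair, S w = (fun n => w.1 (n + 1), fun n => w.2 (n + 1)))
    (w : Pair) : back (S w) = w := by
  rw [hS]
  apply Prod.ext
  · funext n; show w.1 (n - 1 + 1) = w.1 n; norm_num
  · funext n; show w.2 (n - 1 + 1) = w.2 n; norm_num

lemma back_pos (w : Pair) (hw : ∀ n, 0 < w.1 n) : ∀ n, 0 < (back w).1 n :=
  fun n => hw (n-1)

lemma S_pos (hS : ∀ w : Pair, S w = (fun n => w.1 (n + 1), fun n => w.2 (n + 1)))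
    (w : Pair) (hw : ∀ n, 0 < w.1 n) : ∀ n, 0 < (S w).1 n := by
  intro n; rw [hS]; exact hw (n+1)

lemma shift_single (k : ℤ) :
    (fun m : ℤ => (Pi.single k (1:ℂ) : ℤ → ℂ) (m-1)) = (Pi.single (k+1) (1:ℂ) : ℤ → ℂ) := by
  funext m
  simp only [Pi.single_apply]
  split_ifs <;> first | rfl | (exfalso; omega)


variable (hJ : ∀ (w : Pair) (u : ℤ → ℂ) (n : ℤ),
      Jop w u n = (w.1 n : ℂ) * u (n + 1) + (w.1 (n - 1) : ℂ) * u (n - 1) + (w.2 n : ℂ) * u n)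
  (hS : ∀ w : Pair, S w = (fun n => w.1 (n + 1), fun n => w.2 (n + 1)))
  (hμ : ∀ (w : Pair) (t : ℕ), μ w t = ((Jop w ^ t) (Pi.single 1 1)) 1)
  (hν : ∀ (w : Pair) (t : ℕ), ν w t = ((Jop w ^ t) (Pi.single 2 1)) 1)

include hJ hS hμ hν

lemma muS (w : Pair) (t : ℕ) : μ (S w) t = (Jop w ^ t) (Pi.single 2 1) 2 := by
  rw [hμ, conjpow hJ hS w t]
  norm_num [shift_single 1]

lemma mub (w : Pair) (t : ℕ) : μ (back w) t = (Jop w ^ t) (Pi.single 0 1) 0 := by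
  have h := conjpow hJ hS (back w) t (Pi.single 0 1) 0
  rw [S_back hS, shift_single 0] at h
  rw [hμ]
  norm_num at h
  rw [h]

lemma nub (w : Pair) (t : ℕ) : ν (back w) t = (Jop w ^ t) (Pi.single 1 1) 0 := by
  have h := conjpow hJ hS (back w) t (Pi.single 1 1) 0
  rw [S_back hS, shift_single 1] at h
  rw [hν]
  norm_num at h
  rw [h]

lemma mu1 (w : Pair) : μ w 1 = (w.2 1 : ℂ) := by
  rw [hμ, pow_one, hJ]
  norm_num [Pi.single_apply]

lemma nu1 (w : Pair) : ν w 1 = (w.1 1 : ℂ) := by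
  rw [hν, pow_one, hJ]
  norm_num [Pi.single_apply]

lemma nub1 (w : Pair) : ν (back w) 1 = (w.1 0 : ℂ) := by
  rw [nub hJ hS hμ hν, pow_one, hJ]
  norm_num [Pi.single_apply]

lemma Emu (w : Pair) (t : ℕ) : μ w (t+1)
    = (w.2 1 : ℂ) * μ w t + (w.1 1 : ℂ) * ν w t + (w.1 0 : ℂ) * ν (back w) t := by
  rw [hμ w (t+1), E2 hJ w t 1 1]
  norm_num
  rw [symG hJ w t 2 1, ← hμ w t, ← hν w t, ← nub hJ hS hμ hν w t]
  ring

lemma Enu (w : Pair) (t : ℕ) : ν w (t+1)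
    = (w.1 1 : ℂ) * μ (S w) t + (w.1 0 : ℂ) * ((Jop w ^ t) (Pi.single 2 1) 0)
      + (w.2 1 : ℂ) * ν w t := by
  rw [hν w (t+1), E2 hJ w t 2 1]
  norm_num
  rw [← muS hJ hS hμ hν w t, ← hν w t]
  try ring

lemma Enub (w : Pair) (t : ℕ) : ν (back w) (t+1)
    = (w.1 0 : ℂ) * μ (back w) t + (w.1 1 : ℂ) * ((Jop w ^ t) (Pi.single 2 1) 0)
      + (w.2 1 : ℂ) * ν (back w) t := by
  rw [nub hJ hS hμ hν w (t+1), E1 hJ w t 1 0]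
  norm_num
  rw [← mub hJ hS hμ hν w t, ← nub hJ hS hμ hν w t]
  try ring

end MainpropAux

namespace MainpropAux

lemma sum_peel (f : ℕ → ℂ) (a b : ℕ) (h : a ≤ b) :
    ∑ s ∈ Finset.Icc a b, f s = f a + ∑ s ∈ Finset.Icc (a+1) b, f s := by
  rw [show Finset.Icc a b = insert a (Finset.Icc (a+1) b) from by
        ext x; simp only [Finset.mem_Icc, Finset.mem_insert]; omega,
      Finset.sum_insert (by simp only [Finset.mem_Icc]; omega)]

end MainpropAux

open MainpropAux

theorem mainprop_p_q_shift_invariant_and_equal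
    (d : ℕ) (hd : 1 ≤ d)
    (Jop : ((ℤ → ℝ) × (ℤ → ℝ)) → ((ℤ → ℂ) →ₗ[ℂ] (ℤ → ℂ)))
    (hJ : ∀ (w : (ℤ → ℝ) × (ℤ → ℝ)) (u : ℤ → ℂ) (n : ℤ),
      Jop w u n = (w.1 n : ℂ) * u (n + 1) + (w.1 (n - 1) : ℂ) * u (n - 1) + (w.2 n : ℂ) * u n)
    (S : ((ℤ → ℝ) × (ℤ → ℝ)) → ((ℤ → ℝ) × (ℤ → ℝ)))
    (hS : ∀ w : (ℤ → ℝ) × (ℤ → ℝ), S w = (fun n => w.1 (n + 1), fun n => w.2 (n + 1)))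
    (μ ν : ((ℤ → ℝ) × (ℤ → ℝ)) → ℕ → ℂ)
    (hμ : ∀ (w : (ℤ → ℝ) × (ℤ → ℝ)) (t : ℕ), μ w t = ((Jop w ^ t) (Pi.single 1 1)) 1)
    (hν : ∀ (w : (ℤ → ℝ) × (ℤ → ℝ)) (t : ℕ), ν w t = ((Jop w ^ t) (Pi.single 2 1)) 1)
    (A C D : ℕ → ((ℤ → ℝ) × (ℤ → ℝ)) → ℂ)
    (p q : ℕ → ((ℤ → ℝ) × (ℤ → ℝ)) → ℂ)
    (hi : ∀ w : (ℤ → ℝ) × (ℤ → ℝ), (∀ n, 0 < w.1 n) →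
      ∀ j ≤ d, D j (S w) = -(w.1 1 : ℂ) ^ 2 * C j w)
    (hii : ∀ w : (ℤ → ℝ) × (ℤ → ℝ), (∀ n, 0 < w.1 n) → C d w = 0)
    (hiii : ∀ w : (ℤ → ℝ) × (ℤ → ℝ), (∀ n, 0 < w.1 n) → ∀ j, 1 ≤ j → j ≤ d →
      A j (S w) + A j w = C (j - 1) w - (w.2 1 : ℂ) * C j w)
    (hiv : ∀ w : (ℤ → ℝ) × (ℤ → ℝ), (∀ n, 0 < w.1 n) → A d (S w) = A d w)
    (hv : ∀ w : (ℤ → ℝ) × (ℤ → ℝ), (∀ n, 0 < w.1 n) → ∀ j, 2 ≤ j → j ≤ d →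
      -(w.2 1 : ℂ) * (A j (S w) - A j w) + (A (j - 1) (S w) - A (j - 1) w)
        = (w.1 1 : ℂ) ^ 2 * C j (S w) + D j w)
    (hpd : ∀ w : (ℤ → ℝ) × (ℤ → ℝ), (∀ n, 0 < w.1 n) → p d w = C (d - 1) w / 2)
    (hpr : ∀ w : (ℤ → ℝ) × (ℤ → ℝ), (∀ n, 0 < w.1 n) → ∀ r, 1 ≤ r → r ≤ d →
      p r w = C (r - 1) w / 2 - ∑ s ∈ Finset.Icc (r + 1) d, p s w * μ w (s - r))
    (hqd : ∀ w : (ℤ → ℝ) × (ℤ → ℝ), (∀ n, 0 < w.1 n) → q d w = -A d w + C (d - 1) w)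
    (hqd1 : ∀ w : (ℤ → ℝ) × (ℤ → ℝ), (∀ n, 0 < w.1 n) →
      q (d - 1) w = -A (d - 1) w + C (d - 2) w - (w.2 1 : ℂ) * C (d - 1) w)
    (hqr : ∀ w : (ℤ → ℝ) × (ℤ → ℝ), (∀ n, 0 < w.1 n) → ∀ r, 1 ≤ r → r ≤ d - 2 →
      q r w = -2 * (w.1 1 : ℂ) * ∑ s ∈ Finset.Icc (r + 2) d, ν w (s - r - 1) * q s w
        - A r w + C (r - 1) w - (w.2 1 : ℂ) * C r w) :
    ∀ w : (ℤ → ℝ) × (ℤ → ℝ), (∀ n, 0 < w.1 n) → ∀ j, 1 ≤ j → j ≤ d →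
      p j (S w) = p j w ∧ q j (S w) = q j w ∧ p j w = q j w := by
  classical
  -- uniform form of the q recursion
  have hqform : ∀ w : Pair, (∀ n, 0 < w.1 n) → ∀ j, 1 ≤ j → j ≤ d →
      q j w = A j (S w)
        - 2*(w.1 1:ℂ) * ∑ s ∈ Finset.Icc (j+2) d, ν w (s-j-1) * q s w := by
    intro w pw j hj1 hjd
    by_cases hc : j = d
    · subst hc
      rw [Finset.Icc_eq_empty (by omega), Finset.sum_empty]
      have h3 := hiii w pw j hj1 hjd
      have h2 := hii w pw
      have hq := hqd w pw
      linear_combination hq - h3 + (w.2 1:ℂ) * h2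
    · by_cases hc1 : j = d - 1
      · have hd2 : 2 ≤ d := by omega
        rw [Finset.Icc_eq_empty (by omega), Finset.sum_empty]
        have h3 := hiii w pw j hj1 hjd
        have hq := hqd1 w pw
        rw [← hc1] at hq
        rw [show j - 1 = d - 2 from by omega] at h3
        rw [show d - 2 = j - 1 from by omega] at hq h3
        linear_combination hq - h3
      · have h3 := hiii w pw j hj1 hjd
        have hq := hqr w pw j hj1 (by omega)
        linear_combination hq - h3
  -- the main downward induction
  have key : ∀ k : ℕ, ∀ j : ℕ, 1 ≤ j → j + k = d → ∀ w : Pair, (∀ n, 0 < w.1 n) →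
      (p j (S w) = p j w ∧ q j (S w) = q j w ∧ p j w = q j w ∧
        (A j (S w) - A j w
          = 2*(w.1 1:ℂ) * (∑ s ∈ Finset.Icc (j+2) d, ν w (s-j-1) * p s w)
          - 2*(w.1 0:ℂ) * (∑ s ∈ Finset.Icc (j+2) d, ν (back w) (s-j-1) * p s (back w)))) := by
    intro k
    induction k using Nat.strong_induction_on with
    | _ k IH =>
    intro j hj1 hjk w pw
    have hjd : j ≤ d := by omega
    have IH' : ∀ s, j < s → s ≤ d → ∀ v : Pair, (∀ n, 0 < v.1 n) →
        (p s (S v) = p s v ∧ q s (S v) = q s v ∧ p s v = q s v ∧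
          (A s (S v) - A s v
            = 2*(v.1 1:ℂ) * (∑ x ∈ Finset.Icc (s+2) d, ν v (x-s-1) * p x v)
            - 2*(v.1 0:ℂ) * (∑ x ∈ Finset.Icc (s+2) d, ν (back v) (x-s-1) * p x (back v)))) := by
      intro s hs1 hs2 v pv
      exact IH (d - s) (by omega) s (by omega) (by omega) v pv
    -- shift invariance of p at higher indices
    have pinv : ∀ s, j < s → s ≤ d → ∀ v : Pair, (∀ n, 0 < v.1 n) → p s (S v) = p s v :=
      fun s h1 h2 v pv => (IH' s h1 h2 v pv).1
    have pbac : ∀ s, j < s → s ≤ d → ∀ v : Pair, (∀ n, 0 < v.1 n) → p s (back v) = p s v := by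
      intro s h1 h2 v pv
      have h := pinv s h1 h2 (back v) (back_pos v pv)
      rw [S_back hS] at h
      exact h.symm
    -- Part P4
    have P4all : ∀ v : Pair, (∀ n, 0 < v.1 n) →
        A j (S v) - A j v
          = 2*(v.1 1:ℂ) * (∑ s ∈ Finset.Icc (j+2) d, ν v (s-j-1) * p s v)
          - 2*(v.1 0:ℂ) * (∑ s ∈ Finset.Icc (j+2) d, ν (back v) (s-j-1) * p s (back v)) := by
      intro v pv
      by_cases hc : j = d
      · simp only [Finset.Icc_eq_empty (show ¬ j + 2 ≤ d by omega), Finset.sum_empty]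
        rw [hc, hiv v pv]
        ring
      · -- j + 1 ≤ d : the recursion in j via (v) and (i)
        have hj1d : j + 1 ≤ d := by omega
        have f6 := hv v pv (j+1) (by omega) hj1d
        rw [show j + 1 - 1 = j from by omega] at f6
        have f7 := hi (back v) (back_pos v pv) (j+1) hj1d
        rw [S_back hS] at f7
        have hb1 : ((back v).1 1 : ℂ) = (v.1 0 : ℂ) := by
          show ((v.1 (1-1) : ℝ) : ℂ) = _
          norm_num
        rw [hb1] at f7
        -- rewrite the back-sum to use p s v
        have gB : (∑ s ∈ Finset.Icc (j+2) d, ν (back v) (s-j-1) * p s (back v))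
            = (∑ s ∈ Finset.Icc (j+2) d, ν (back v) (s-j-1) * p s v) := by
          refine Finset.sum_congr rfl fun s hs => ?_
          have hm := Finset.mem_Icc.mp hs
          rw [pbac s (by omega) hm.2 v pv]
        rw [gB]
        by_cases hc2 : j + 1 = d
        · simp only [Finset.Icc_eq_empty (show ¬ j + 2 ≤ d by omega), Finset.sum_empty]
          have g1 : A (j+1) (S v) = A (j+1) v := by
            have h := hiv v pv; rw [← hc2] at h; exact h
          have g2 : C (j+1) (S v) = 0 := by
            have h := hii (S v) (S_pos hS v pv); rw [← hc2] at h; exact h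
          have g3 : C (j+1) (back v) = 0 := by
            have h := hii (back v) (back_pos v pv); rw [← hc2] at h; exact h
          linear_combination f6 + f7 + (v.2 1:ℂ)*g1 + (v.1 1:ℂ)^2*g2 - (v.1 0:ℂ)^2*g3
        · have hj2d : j + 2 ≤ d := by omega
          -- decomposition of the sum for v
          have s1 : (∑ s ∈ Finset.Icc (j+2) d, ν v (s-j-1) * p s v)
              = (v.1 1:ℂ) * p (j+2) v + ∑ s ∈ Finset.Icc (j+3) d, ν v (s-j-1) * p s v := by
            rw [sum_peel _ _ _ hj2d, show j+2-j-1 = 1 from by omega, nu1 hJ hS hμ hν v]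
          have s2 : (∑ s ∈ Finset.Icc (j+3) d, ν v (s-j-1) * p s v)
              = (v.1 1:ℂ) * (∑ s ∈ Finset.Icc (j+3) d, μ (S v) (s-j-2) * p s v)
                + ((v.1 0:ℂ) * (∑ s ∈ Finset.Icc (j+3) d, ((Jop v ^ (s-j-2)) (Pi.single 2 1) 0) * p s v)
                + (v.2 1:ℂ) * (∑ s ∈ Finset.Icc (j+3) d, ν v (s-j-2) * p s v)) := by
            rw [Finset.mul_sum, Finset.mul_sum, Finset.mul_sum,
              ← Finset.sum_add_distrib, ← Finset.sum_add_distrib]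
            refine Finset.sum_congr rfl fun s hs => ?_
            have hm := Finset.mem_Icc.mp hs
            rw [show s-j-1 = (s-j-2)+1 from by omega, Enu hJ hS hμ hν v (s-j-2)]
            ring
          have s3 : (∑ s ∈ Finset.Icc (j+3) d, μ (S v) (s-j-2) * p s v)
              = C (j+1) (S v)/2 - p (j+2) v := by
            have hp := hpr (S v) (S_pos hS v pv) (j+2) (by omega) hj2d
            rw [show j+2-1 = j+1 from by omega] at hp
            have e : (∑ s ∈ Finset.Icc (j+2+1) d, p s (S v) * μ (S v) (s - (j+2)))
                = ∑ s ∈ Finset.Icc (j+3) d, μ (S v) (s-j-2) * p s v := by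
              refine Finset.sum_congr (by norm_num) fun s hs => ?_
              have hm := Finset.mem_Icc.mp hs
              rw [pinv s (by omega) (by omega) v pv, show s - (j+2) = s-j-2 from by omega]
              ring
            rw [e] at hp
            have e2 : p (j+2) (S v) = p (j+2) v := pinv (j+2) (by omega) hj2d v pv
            rw [e2] at hp
            linear_combination hp
          -- decomposition of the sum for back v
          have t1 : (∑ s ∈ Finset.Icc (j+2) d, ν (back v) (s-j-1) * p s v)
              = (v.1 0:ℂ) * p (j+2) v + ∑ s ∈ Finset.Icc (j+3) d, ν (back v) (s-j-1) * p s v := by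
            rw [sum_peel _ _ _ hj2d, show j+2-j-1 = 1 from by omega, nub1 hJ hS hμ hν v]
          have t2 : (∑ s ∈ Finset.Icc (j+3) d, ν (back v) (s-j-1) * p s v)
              = (v.1 0:ℂ) * (∑ s ∈ Finset.Icc (j+3) d, μ (back v) (s-j-2) * p s v)
                + ((v.1 1:ℂ) * (∑ s ∈ Finset.Icc (j+3) d, ((Jop v ^ (s-j-2)) (Pi.single 2 1) 0) * p s v)
                + (v.2 1:ℂ) * (∑ s ∈ Finset.Icc (j+3) d, ν (back v) (s-j-2) * p s v)) := by
            rw [Finset.mul_sum, Finset.mul_sum, Finset.mul_sum,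
              ← Finset.sum_add_distrib, ← Finset.sum_add_distrib]
            refine Finset.sum_congr rfl fun s hs => ?_
            have hm := Finset.mem_Icc.mp hs
            rw [show s-j-1 = (s-j-2)+1 from by omega, Enub hJ hS hμ hν v (s-j-2)]
            ring
          have t3 : (∑ s ∈ Finset.Icc (j+3) d, μ (back v) (s-j-2) * p s v)
              = C (j+1) (back v)/2 - p (j+2) v := by
            have hp := hpr (back v) (back_pos v pv) (j+2) (by omega) hj2d
            rw [show j+2-1 = j+1 from by omega] at hp
            have e : (∑ s ∈ Finset.Icc (j+2+1) d, p s (back v) * μ (back v) (s - (j+2)))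
                = ∑ s ∈ Finset.Icc (j+3) d, μ (back v) (s-j-2) * p s v := by
              refine Finset.sum_congr (by norm_num) fun s hs => ?_
              have hm := Finset.mem_Icc.mp hs
              rw [pbac s (by omega) (by omega) v pv, show s - (j+2) = s-j-2 from by omega]
              ring
            rw [e] at hp
            have e2 : p (j+2) (back v) = p (j+2) v := pbac (j+2) (by omega) hj2d v pv
            rw [e2] at hp
            linear_combination hp
          -- induction hypothesis P4 at j+1
          have fIH0 := (IH' (j+1) (by omega) hj1d v pv).2.2.2
          have eIcc : Finset.Icc (j+1+2) d = Finset.Icc (j+3) d := by norm_num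
          rw [eIcc] at fIH0
          have eA : (∑ x ∈ Finset.Icc (j+3) d, ν v (x-(j+1)-1) * p x v)
              = ∑ x ∈ Finset.Icc (j+3) d, ν v (x-j-2) * p x v := by
            refine Finset.sum_congr rfl fun x hx => ?_
            rw [show x-(j+1)-1 = x-j-2 from by omega]
          have eB : (∑ x ∈ Finset.Icc (j+3) d, ν (back v) (x-(j+1)-1) * p x (back v))
              = ∑ x ∈ Finset.Icc (j+3) d, ν (back v) (x-j-2) * p x v := by
            refine Finset.sum_congr rfl fun x hx => ?_
            have hm := Finset.mem_Icc.mp hx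
            rw [show x-(j+1)-1 = x-j-2 from by omega, pbac x (by omega) hm.2 v pv]
          rw [eA, eB] at fIH0
          have sAll : (∑ s ∈ Finset.Icc (j+2) d, ν v (s-j-1) * p s v)
              = (v.1 1:ℂ) * p (j+2) v + ((v.1 1:ℂ) * (C (j+1) (S v)/2 - p (j+2) v)
                + ((v.1 0:ℂ) * (∑ s ∈ Finset.Icc (j+3) d, ((Jop v ^ (s-j-2)) (Pi.single 2 1) 0) * p s v)
                + (v.2 1:ℂ) * (∑ s ∈ Finset.Icc (j+3) d, ν v (s-j-2) * p s v))) := by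
            rw [s1, s2, s3]
          have tAll : (∑ s ∈ Finset.Icc (j+2) d, ν (back v) (s-j-1) * p s v)
              = (v.1 0:ℂ) * p (j+2) v + ((v.1 0:ℂ) * (C (j+1) (back v)/2 - p (j+2) v)
                + ((v.1 1:ℂ) * (∑ s ∈ Finset.Icc (j+3) d, ((Jop v ^ (s-j-2)) (Pi.single 2 1) 0) * p s v)
                + (v.2 1:ℂ) * (∑ s ∈ Finset.Icc (j+3) d, ν (back v) (s-j-2) * p s v))) := by
            rw [t1, t2, t3]
          linear_combination f6 + f7 + (v.2 1:ℂ)*fIH0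
            - 2*(v.1 1:ℂ)*sAll + 2*(v.1 0:ℂ)*tAll
    -- uniform p-form of q at level j
    have qpform : ∀ v : Pair, (∀ n, 0 < v.1 n) →
        q j v = A j (S v)
          - 2*(v.1 1:ℂ) * (∑ s ∈ Finset.Icc (j+2) d, ν v (s-j-1) * p s v) := by
      intro v pv
      rw [hqform v pv j hj1 hjd]
      have e : (∑ s ∈ Finset.Icc (j+2) d, ν v (s-j-1) * q s v)
          = ∑ s ∈ Finset.Icc (j+2) d, ν v (s-j-1) * p s v := by
        refine Finset.sum_congr rfl fun s hs => ?_
        have hm := Finset.mem_Icc.mp hs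
        rw [(IH' s (by omega) hm.2 v pv).2.2.1]
      rw [e]
    -- Part P1
    have P1all : ∀ v : Pair, (∀ n, 0 < v.1 n) → p j v = q j v := by
      intro v pv
      by_cases hc : j = d
      · subst hc
        have e1 := hpd v pv
        have e2 := hqd v pv
        have e3 := hiii v pv j hj1 hjd
        have e4 := hii v pv
        have e5 := hiv v pv
        linear_combination e1 - e2 + e3/2 - (v.2 1:ℂ)*e4/2 - e5/2
      · have hj1d : j + 1 ≤ d := by omega
        have e1 := hpr v pv j hj1 hjd
        have e2 := qpform v pv
        have e3 := hiii v pv j hj1 hjd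
        -- decompose the μ-sum
        have s1 : (∑ s ∈ Finset.Icc (j+1) d, p s v * μ v (s-j))
            = p (j+1) v * (v.2 1:ℂ) + ∑ s ∈ Finset.Icc (j+2) d, p s v * μ v (s-j) := by
          rw [sum_peel _ _ _ hj1d, show j+1-j = 1 from by omega, mu1 hJ hS hμ hν v]
          try norm_num
          try ring
        have s2 : (∑ s ∈ Finset.Icc (j+2) d, p s v * μ v (s-j))
            = (v.2 1:ℂ) * (∑ s ∈ Finset.Icc (j+2) d, p s v * μ v (s-j-1))
              + ((v.1 1:ℂ) * (∑ s ∈ Finset.Icc (j+2) d, ν v (s-j-1) * p s v)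
              + (v.1 0:ℂ) * (∑ s ∈ Finset.Icc (j+2) d, ν (back v) (s-j-1) * p s v)) := by
          rw [Finset.mul_sum, Finset.mul_sum, Finset.mul_sum,
            ← Finset.sum_add_distrib, ← Finset.sum_add_distrib]
          refine Finset.sum_congr rfl fun s hs => ?_
          have hm := Finset.mem_Icc.mp hs
          have h := Emu hJ hS hμ hν v (s-j-1)
          rw [show (s-j-1)+1 = s-j from by omega] at h
          rw [h]
          ring
        have s3 : (∑ s ∈ Finset.Icc (j+2) d, p s v * μ v (s-j-1))
            = C j v/2 - p (j+1) v := by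
          have hp := hpr v pv (j+1) (by omega) hj1d
          rw [show j+1-1 = j from by omega] at hp
          have e : (∑ s ∈ Finset.Icc (j+1+1) d, p s v * μ v (s - (j+1)))
              = ∑ s ∈ Finset.Icc (j+2) d, p s v * μ v (s-j-1) := by
            refine Finset.sum_congr (by norm_num) fun s hs => ?_
            rw [show s - (j+1) = s-j-1 from by omega]
          rw [e] at hp
          linear_combination hp
        have s4 : (∑ s ∈ Finset.Icc (j+2) d, ν (back v) (s-j-1) * p s v)
            = ∑ s ∈ Finset.Icc (j+2) d, ν (back v) (s-j-1) * p s (back v) := by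
          refine Finset.sum_congr rfl fun s hs => ?_
          have hm := Finset.mem_Icc.mp hs
          rw [pbac s (by omega) hm.2 v pv]
        have e6 := P4all v pv
        have sAll : (∑ s ∈ Finset.Icc (j+1) d, p s v * μ v (s-j))
            = p (j+1) v * (v.2 1:ℂ) + ((v.2 1:ℂ) * (C j v/2 - p (j+1) v)
              + ((v.1 1:ℂ) * (∑ s ∈ Finset.Icc (j+2) d, ν v (s-j-1) * p s v)
              + (v.1 0:ℂ) * (∑ s ∈ Finset.Icc (j+2) d, ν (back v) (s-j-1) * p s v))) := by
          rw [s1, s2, s3]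
        linear_combination e1 - e2 - sAll - (v.1 0:ℂ)*s4 - e3/2 - e6/2
    -- Part P3
    have P3all : ∀ v : Pair, (∀ n, 0 < v.1 n) → q j (S v) = q j v := by
      intro v pv
      have g1 := qpform (S v) (S_pos hS v pv)
      have g2 := qpform v pv
      have g3 := P4all (S v) (S_pos hS v pv)
      rw [back_S hS v] at g3
      have g4 : ((S v).1 0 : ℂ) = (v.1 1 : ℂ) := by
        rw [hS]
        norm_num
      rw [g4] at g3
      linear_combination g1 - g2 + g3
    refine ⟨?_, P3all w pw, P1all w pw, P4all w pw⟩
    exact (P1all (S w) (S_pos hS w pw)).trans ((P3all w pw).trans (P1all w pw).symm)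
  intro w pw j hj1 hj2
  obtain ⟨h1, h2, h3, _⟩ := key (d - j) j hj1 (by omega) w pw
  exact ⟨h1, h2, h3⟩
end
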